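/- arXiv:2112.10289 — 2 statements merged into one kernel-verified Lean document; each statement's English description precedes it below -/
import Mathlib

section
/- For every n ≥ 4 and every natural number c with 2c > n, there is no irreducible meandric permutation of {1,…,n} with exactly c cups, i.e., M^{Irr}_{n,c} = 0 whenever c > n/2. -/
namespace MeanderFormal

/-- The normalized chord with endpoints `a` and `b`. -/
def chord (a b : ℕ) : ℕ × ℕ := (min a b, max a b)

/-- Two normalized chords `{p.1,p.2}` and `{q.1,q.2}` cross. -/
def Cross (p q : ℕ × ℕ) : Prop :=
  (p.1 < q.1 ∧ q.1 < p.2 ∧ p.2 < q.2) ∨ (q.1 < p.1 ∧ p.1 < q.2 ∧ q.2 < p.2)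

/-- A system of chords is pairwise noncrossing. -/
def Noncrossing (S : Set (ℕ × ℕ)) : Prop :=
  ∀ p ∈ S, ∀ q ∈ S, ¬ Cross p q

/-- One-indexed value sequence of a permutation of `Fin n`:
`val σ k = a_k ∈ {1,…,n}` for `1 ≤ k ≤ n`, and `0` otherwise. -/
def val {n : ℕ} (σ : Equiv.Perm (Fin n)) (k : ℕ) : ℕ :=
  if h : 1 ≤ k ∧ k ≤ n then ((σ ⟨k - 1, by omega⟩ : Fin n) : ℕ) + 1 else 0

/-- The upper chord system of a permutation, on the points `{0,1,…,n+1}`. -/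
def upperChords {n : ℕ} (σ : Equiv.Perm (Fin n)) : Set (ℕ × ℕ) :=
  {chord 0 (val σ 1)}
    ∪ {c | ∃ k, 1 ≤ k ∧ 2 * k < n ∧ c = chord (val σ (2 * k)) (val σ (2 * k + 1))}
    ∪ {c | n % 2 = 0 ∧ c = chord (val σ n) (n + 1)}

/-- The lower chord system of a permutation, on the points `{0,1,…,n+1}`. -/
def lowerChords {n : ℕ} (σ : Equiv.Perm (Fin n)) : Set (ℕ × ℕ) :=
  {c | ∃ k, 1 ≤ k ∧ 2 * k ≤ n ∧ c = chord (val σ (2 * k - 1)) (val σ (2 * k))}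
    ∪ {c | n % 2 = 1 ∧ c = chord (val σ n) (n + 1)}

/-- `σ` is a meandric permutation. -/
def IsMeandric {n : ℕ} (σ : Equiv.Perm (Fin n)) : Prop :=
  Noncrossing (upperChords σ) ∧ Noncrossing (lowerChords σ)

/-- A set of naturals is an interval of consecutive integers. -/
def IsInterval (S : Set ℕ) : Prop :=
  ∀ x ∈ S, ∀ y ∈ S, ∀ z, x ≤ z → z ≤ y → z ∈ S

/-- A double interval of `σ`: a nonempty interval `S ⊆ {1,…,n}` whose set of
positions (preimage) is also an interval. -/
def IsDoubleInterval {n : ℕ} (σ : Equiv.Perm (Fin n)) (S : Set ℕ) : Prop :=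
  S.Nonempty ∧ S ⊆ Set.Icc 1 n ∧ IsInterval S ∧
    IsInterval {k | k ∈ Set.Icc 1 n ∧ val σ k ∈ S}

/-- `σ` is irreducible: no double interval of width `w` with `2 < w < n`. -/
def IsIrreducible {n : ℕ} (σ : Equiv.Perm (Fin n)) : Prop :=
  ¬ ∃ S : Set ℕ, IsDoubleInterval σ S ∧ 2 < S.ncard ∧ S.ncard < n

/-- A cup of `σ`: a double interval of width 2. -/
def IsCup {n : ℕ} (σ : Equiv.Perm (Fin n)) (S : Set ℕ) : Prop :=
  IsDoubleInterval σ S ∧ S.ncard = 2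

/-- The number of cups of `σ`. -/
noncomputable def cupCount {n : ℕ} (σ : Equiv.Perm (Fin n)) : ℕ :=
  Set.ncard {S : Set ℕ | IsCup σ S}

/-- `S₁` is covered by `S₂` among the double intervals of `σ`. -/
def Covers {n : ℕ} (σ : Equiv.Perm (Fin n)) (S₁ S₂ : Set ℕ) : Prop :=
  S₁ ⊂ S₂ ∧ ¬ ∃ S' : Set ℕ, IsDoubleInterval σ S' ∧ S₁ ⊂ S' ∧ S' ⊂ S₂

/-- The decomposition graph of `σ`: vertices are double intervals, adjacency is
the covering relation (in either direction). -/
def decompGraph {n : ℕ} (σ : Equiv.Perm (Fin n)) :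
    SimpleGraph {S : Set ℕ // IsDoubleInterval σ S} where
  Adj A B := Covers σ A.1 B.1 ∨ Covers σ B.1 A.1
  symm := ⟨fun A B h => Or.symm h⟩
  loopless := ⟨by
    intro A h
    rcases h with h | h <;> exact h.1.ne rfl⟩

/-- `v` is an articulation point of `G`: deleting it increases the number of
connected components. -/
def IsArticulationPoint {V : Type*} (G : SimpleGraph V) (v : V) : Prop :=
  Nat.card G.ConnectedComponent <
    Nat.card ((G.induce {u : V | u ≠ v}).ConnectedComponent)

/-- A snake: a meandric permutation whose decomposition graph has no
articulation point. -/
def IsSnake {n : ℕ} (σ : Equiv.Perm (Fin n)) : Prop :=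
  IsMeandric σ ∧ ∀ v, ¬ IsArticulationPoint (decompGraph σ) v

/-- The reversal permutation `(n, n-1, …, 1)`. -/
def reversalPerm (n : ℕ) : Equiv.Perm (Fin n) :=
  ⟨Fin.rev, Fin.rev, Fin.rev_rev, Fin.rev_rev⟩

/-- The number `M_n` of meandric permutations of `{1,…,n}`. -/
noncomputable def meanderCount (n : ℕ) : ℕ :=
  Nat.card {σ : Equiv.Perm (Fin n) // IsMeandric σ}

/-- The number of snakes of order `n`. -/
noncomputable def snakeCount (n : ℕ) : ℕ :=
  Nat.card {σ : Equiv.Perm (Fin n) // IsSnake σ}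

/-- The number `M^{Irr}_n` of irreducible meandric permutations of `{1,…,n}`. -/
noncomputable def irrCount (n : ℕ) : ℕ :=
  Nat.card {σ : Equiv.Perm (Fin n) // IsMeandric σ ∧ IsIrreducible σ}

/-- The number `M^{Irr}_{n,c}` of irreducible meandric permutations of `{1,…,n}`
with exactly `c` cups. -/
noncomputable def irrCupCount (n c : ℕ) : ℕ :=
  Nat.card {σ : Equiv.Perm (Fin n) // IsMeandric σ ∧ IsIrreducible σ ∧ cupCount σ = c}

/-!
Two cups `{i, i+1}` and `{i+1, i+2}` overlap, so their union `{i, i+1, i+2}` is again a double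
interval; in an irreducible permutation of order `n ≥ 4` this width-3 double interval is
forbidden. Hence the left endpoints `i` of the cups contain no two consecutive integers, and
together with their successors they form `2 c` distinct points of `{1, …, n}`.
-/

theorem _root_.Finset.two_mul_card_le_of_succ_notMem {s : Finset ℕ} {n : ℕ}
    (hs : s ⊆ Finset.Ico 1 n) (h : ∀ i ∈ s, i + 1 ∉ s) : 2 * s.card ≤ n := by
  have hdisj : Disjoint s (s.map (addRightEmbedding 1)) := by
    rw [Finset.disjoint_left]
    intro x hx hx'
    obtain ⟨j, hj, rfl⟩ := Finset.mem_map.mp hx'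
    exact h j hj hx
  have hsub : s ∪ s.map (addRightEmbedding 1) ⊆ Finset.Icc 1 n := by
    intro x hx
    rcases Finset.mem_union.mp hx with hx | hx
    · exact Finset.Ico_subset_Icc_self (hs hx)
    · obtain ⟨j, hj, rfl⟩ := Finset.mem_map.mp hx
      have := Finset.mem_Ico.mp (hs hj)
      simp only [addRightEmbedding_apply, Finset.mem_Icc]
      omega
  have hcard := Finset.card_le_card hsub
  rw [Finset.card_union_of_disjoint hdisj, Finset.card_map, Nat.card_Icc] at hcard
  omega

theorem IsInterval.union {S T : Set ℕ} (hS : IsInterval S) (hT : IsInterval T) {a : ℕ}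
    (haS : a ∈ S) (haT : a ∈ T) : IsInterval (S ∪ T) := by
  intro x hx y hy z hxz hzy
  rcases le_total z a with hza | haz
  · rcases hx with hx | hx
    · exact Or.inl (hS x hx a haS z hxz hza)
    · exact Or.inr (hT x hx a haT z hxz hza)
  · rcases hy with hy | hy
    · exact Or.inl (hS a haS y hy z haz hzy)
    · exact Or.inr (hT a haT y hy z haz hzy)

theorem exists_val_eq {n : ℕ} (σ : Equiv.Perm (Fin n)) {a : ℕ} (ha : a ∈ Set.Icc 1 n) :
    ∃ k ∈ Set.Icc 1 n, val σ k = a := by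
  obtain ⟨ha1, han⟩ := ha
  set m : Fin n := σ.symm ⟨a - 1, by omega⟩
  refine ⟨m + 1, ⟨by omega, m.isLt⟩, ?_⟩
  rw [val, dif_pos ⟨by omega, m.isLt⟩]
  simp only [Nat.add_sub_cancel, Fin.eta, m, Equiv.apply_symm_apply]
  omega

theorem IsDoubleInterval.union {n : ℕ} {σ : Equiv.Perm (Fin n)} {S T : Set ℕ}
    (hS : IsDoubleInterval σ S) (hT : IsDoubleInterval σ T) (hST : (S ∩ T).Nonempty) :
    IsDoubleInterval σ (S ∪ T) := by
  obtain ⟨a, haS, haT⟩ := hST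
  obtain ⟨k, hk, hka⟩ := exists_val_eq σ (hS.2.1 haS)
  have hpre : {k | k ∈ Set.Icc 1 n ∧ val σ k ∈ S ∪ T} =
      {k | k ∈ Set.Icc 1 n ∧ val σ k ∈ S} ∪ {k | k ∈ Set.Icc 1 n ∧ val σ k ∈ T} := by
    ext; simp only [Set.mem_ofPred_eq, Set.mem_union, and_or_left]
  refine ⟨hS.1.mono Set.subset_union_left, Set.union_subset hS.2.1 hT.2.1,
    hS.2.2.1.union hT.2.2.1 haS haT, ?_⟩
  rw [hpre]
  exact hS.2.2.2.union hT.2.2.2 (a := k) ⟨hk, hka ▸ haS⟩ ⟨hk, hka ▸ haT⟩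

theorem IsCup.exists_eq_pair {n : ℕ} {σ : Equiv.Perm (Fin n)} {S : Set ℕ} (h : IsCup σ S) :
    ∃ i ∈ Finset.Ico 1 n, S = {i, i + 1} := by
  obtain ⟨x, y, hxy, rfl⟩ := Set.ncard_eq_two.mp h.2
  obtain ⟨⟨-, hsub, hint, -⟩, -⟩ := h
  wlog hlt : x < y generalizing x y
  · rw [Set.pair_comm] at hsub hint ⊢
    exact this y x hxy.symm hsub hint (by omega)
  have hx := hsub (Set.mem_insert x {y})
  have hy := hsub (Set.mem_insert_of_mem x rfl)
  have hmid := hint x (Set.mem_insert x {y}) y (Set.mem_insert_of_mem x rfl) (x + 1)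
    (by omega) (by omega)
  simp only [Set.mem_Icc, Set.mem_insert_iff, Set.mem_singleton_iff] at hx hy hmid
  refine ⟨x, Finset.mem_Ico.mpr ⟨hx.1, by omega⟩, ?_⟩
  rw [show y = x + 1 by omega]

theorem IsCup.union_succ {n : ℕ} {σ : Equiv.Perm (Fin n)} {i : ℕ} (h₁ : IsCup σ {i, i + 1})
    (h₂ : IsCup σ {i + 1, i + 2}) :
    IsDoubleInterval σ {i, i + 1, i + 2} ∧ ({i, i + 1, i + 2} : Set ℕ).ncard = 3 := by
  have hunion : ({i, i + 1} ∪ {i + 1, i + 2} : Set ℕ) = {i, i + 1, i + 2} := by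
    ext; simp only [Set.mem_union, Set.mem_insert_iff, Set.mem_singleton_iff]; omega
  refine ⟨hunion ▸ h₁.1.union h₂.1 ⟨i + 1, by simp, by simp⟩, ?_⟩
  exact Set.ncard_eq_three.mpr ⟨i, i + 1, i + 2, by omega, by omega, by omega, rfl⟩

open Classical in
noncomputable def cupStarts {n : ℕ} (σ : Equiv.Perm (Fin n)) : Finset ℕ :=
  (Finset.Ico 1 n).filter fun i => IsCup σ {i, i + 1}

open Classical in
theorem mem_cupStarts {n : ℕ} {σ : Equiv.Perm (Fin n)} {i : ℕ} :
    i ∈ cupStarts σ ↔ i ∈ Finset.Ico 1 n ∧ IsCup σ {i, i + 1} :=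
  Finset.mem_filter

theorem cupCount_eq_card_cupStarts {n : ℕ} (σ : Equiv.Perm (Fin n)) :
    cupCount σ = (cupStarts σ).card := by
  have himage : {S : Set ℕ | IsCup σ S} =
      (fun i => ({i, i + 1} : Set ℕ)) '' (cupStarts σ : Set ℕ) := by
    ext S
    simp only [Set.mem_ofPred_eq, Set.mem_image, Finset.mem_coe, mem_cupStarts]
    constructor
    · intro hS
      obtain ⟨i, hi, rfl⟩ := hS.exists_eq_pair
      exact ⟨i, ⟨hi, hS⟩, rfl⟩
    · rintro ⟨i, ⟨-, hi⟩, rfl⟩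
      exact hi
  have hinj : Set.InjOn (fun i => ({i, i + 1} : Set ℕ)) (cupStarts σ : Set ℕ) := by
    intro a _ b _ hab
    replace hab : ({a, a + 1} : Set ℕ) = {b, b + 1} := hab
    have ha : a ∈ ({b, b + 1} : Set ℕ) := hab ▸ Set.mem_insert a _
    have hb : b ∈ ({a, a + 1} : Set ℕ) := hab ▸ Set.mem_insert b _
    simp only [Set.mem_insert_iff, Set.mem_singleton_iff] at ha hb
    omega
  rw [cupCount, himage, hinj.ncard_image, Set.ncard_coe_finset]

theorem IsIrreducible.succ_notMem_cupStarts {n : ℕ} {σ : Equiv.Perm (Fin n)}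
    (hirr : IsIrreducible σ) (hn : 3 < n) {i : ℕ} (hi : i ∈ cupStarts σ) :
    i + 1 ∉ cupStarts σ := by
  intro hi'
  rw [mem_cupStarts] at hi hi'
  obtain ⟨hdi, hcard⟩ := hi.2.union_succ hi'.2
  exact hirr ⟨_, hdi, by omega, by omega⟩

theorem IsIrreducible.two_mul_cupCount_le {n : ℕ} {σ : Equiv.Perm (Fin n)}
    (hirr : IsIrreducible σ) (hn : 3 < n) : 2 * cupCount σ ≤ n := by
  rw [cupCount_eq_card_cupStarts]
  exact Finset.two_mul_card_le_of_succ_notMem (fun _ hi => (mem_cupStarts.mp hi).1)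
    fun _ hi => hirr.succ_notMem_cupStarts hn hi

/-- For every `n ≥ 4` and every `c` with `2c > n`, there is no
irreducible meandric permutation of `{1,…,n}` with exactly `c` cups. -/
theorem irrCupCount_eq_zero (n c : ℕ) (hn : 4 ≤ n) (hc : n < 2 * c) :
    irrCupCount n c = 0 := by
  rw [irrCupCount, Nat.card_eq_zero]
  refine Or.inl ⟨fun ⟨σ, _, hirr, hcup⟩ => ?_⟩
  have := hirr.two_mul_cupCount_le hn
  omega

end MeanderFormal
end

section
/- For every n with 4 ≤ n ≤ 7, there is no irreducible meandric permutation of {1,…,n}, i.e., M^{Irr}_n = 0 for n = 4, 5, 6, 7. -/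
namespace MeanderFormal

/-!
Only the value sequence `val σ` enters the definitions, so the claim is a finite check over the
`n!` arrangements of `1, …, n`, taken as lists. For every arrangement whose upper and lower chord
systems are noncrossing, a double interval of width strictly between `2` and `n` is found by
searching for a window of positions `[i, j]` that is mapped onto a window of values
`[a, a + (j - i)]`; the kernel runs this search for `n = 4, …, 7`.
-/

open Set

instance (p q : ℕ × ℕ) : Decidable (Cross p q) :=
  inferInstanceAs (Decidable (_ ∨ _))

instance (L : List (ℕ × ℕ)) : Decidable (Noncrossing {c | c ∈ L}) :=
  inferInstanceAs (Decidable (∀ p ∈ L, ∀ q ∈ L, ¬ Cross p q))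

theorem Noncrossing.mono {S T : Set (ℕ × ℕ)} (hT : Noncrossing T) (hST : S ⊆ T) :
    Noncrossing S :=
  fun p hp q hq => hT p (hST hp) q (hST hq)

theorem isInterval_of_ordConnected {S : Set ℕ} (hS : S.OrdConnected) : IsInterval S :=
  fun _ hx _ hy _ hxz hzy => hS.out hx hy ⟨hxz, hzy⟩

section ChordLists

variable (n : ℕ) (v : ℕ → ℕ)

def upperChordList : List (ℕ × ℕ) :=
  chord 0 (v 1) ::
    ((List.range' 1 ((n - 1) / 2)).map (fun k => chord (v (2 * k)) (v (2 * k + 1))) ++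
      if n % 2 = 0 then [chord (v n) (n + 1)] else [])

def lowerChordList : List (ℕ × ℕ) :=
  (List.range' 1 (n / 2)).map (fun k => chord (v (2 * k - 1)) (v (2 * k))) ++
    if n % 2 = 1 then [chord (v n) (n + 1)] else []

end ChordLists

theorem setOf_mem_upperChordList_subset {n : ℕ} (σ : Equiv.Perm (Fin n)) :
    {c | c ∈ upperChordList n (val σ)} ⊆ upperChords σ := by
  intro c (hc : c ∈ upperChordList n (val σ))
  simp only [upperChordList, List.mem_cons, List.mem_append, List.mem_map,
    List.mem_range'_1] at hc
  rcases hc with rfl | ⟨k, hk, rfl⟩ | hc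
  · exact .inl (.inl rfl)
  · exact .inl (.inr ⟨k, hk.1, by omega, rfl⟩)
  · split_ifs at hc with hn
    · exact .inr ⟨hn, List.mem_singleton.mp hc⟩
    · simp at hc

theorem setOf_mem_lowerChordList_subset {n : ℕ} (σ : Equiv.Perm (Fin n)) :
    {c | c ∈ lowerChordList n (val σ)} ⊆ lowerChords σ := by
  intro c (hc : c ∈ lowerChordList n (val σ))
  simp only [lowerChordList, List.mem_append, List.mem_map,
    List.mem_range'_1] at hc
  rcases hc with ⟨k, hk, rfl⟩ | hc
  · exact .inl ⟨k, hk.1, by omega, rfl⟩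
  · split_ifs at hc with hn
    · exact .inr ⟨hn, List.mem_singleton.mp hc⟩
    · simp at hc

theorem isDoubleInterval_Icc {n : ℕ} {σ : Equiv.Perm (Fin n)} {a b i j : ℕ} (ha : 1 ≤ a)
    (hab : a ≤ b) (hb : b ≤ n)
    (hσ : ∀ k ∈ Icc 1 n, (val σ k ∈ Icc a b ↔ k ∈ Icc i j)) :
    IsDoubleInterval σ (Icc a b) := by
  refine ⟨nonempty_Icc.mpr hab, Icc_subset_Icc ha hb, isInterval_of_ordConnected ordConnected_Icc,
    isInterval_of_ordConnected ?_⟩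
  have hpos : {k | k ∈ Icc 1 n ∧ val σ k ∈ Icc a b} = Icc 1 n ∩ Icc i j :=
    ext fun k => and_congr_right (hσ k)
  rw [hpos]
  exact ordConnected_Icc.inter ordConnected_Icc

def HasWideDoubleInterval (n : ℕ) (v : ℕ → ℕ) : Prop :=
  ∃ i < n + 1, ∃ j < n + 1, ∃ a < n + 1, 2 < j + 1 - i ∧ j + 1 - i < n ∧ 1 ≤ a ∧
    a + (j - i) ≤ n ∧ ∀ k < n + 1, 1 ≤ k → (a ≤ v k ∧ v k ≤ a + (j - i) ↔ i ≤ k ∧ k ≤ j)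

instance (n : ℕ) (v : ℕ → ℕ) : Decidable (HasWideDoubleInterval n v) :=
  inferInstanceAs (Decidable (∃ _ < n + 1, _))

theorem HasWideDoubleInterval.not_isIrreducible {n : ℕ} {σ : Equiv.Perm (Fin n)}
    (h : HasWideDoubleInterval n (val σ)) : ¬ IsIrreducible σ := by
  obtain ⟨i, -, j, -, a, -, hw, hwn, ha, hb, hσ⟩ := h
  have hS : IsDoubleInterval σ (Icc a (a + (j - i))) :=
    isDoubleInterval_Icc (i := i) (j := j) ha (by omega) hb fun k hk =>
      hσ k (Nat.lt_succ_of_le hk.2) hk.1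
  exact fun hirr => hirr ⟨_, hS, by rw [ncard_Icc_nat]; omega, by rw [ncard_Icc_nat]; omega⟩

def listVal (l : List ℕ) (k : ℕ) : ℕ := (0 :: l).getD k 0

theorem val_eq_listVal {n : ℕ} (σ : Equiv.Perm (Fin n)) :
    val σ = listVal (List.ofFn fun i => (σ i : ℕ) + 1) := by
  funext k
  rcases k with _ | k
  · simp [val, listVal]
  · by_cases hk : k < n
    · simp [val, listVal, Nat.succ_le_of_lt hk]
    · simp [val, listVal, show ¬ k + 1 ≤ n by omega]

theorem ofFn_val_add_one_perm_range' {n : ℕ} (σ : Equiv.Perm (Fin n)) :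
    (List.ofFn fun i => (σ i : ℕ) + 1).Perm (List.range' 1 n) := by
  have hid : List.ofFn (fun i : Fin n => (i : ℕ) + 1) = List.range' 1 n := by
    apply List.ext_getElem <;> simp [Nat.add_comm]
  exact hid ▸ σ.ofFn_comp_perm (fun i : Fin n => (i : ℕ) + 1)

theorem exists_mem_permutations'_val_eq {n : ℕ} (σ : Equiv.Perm (Fin n)) :
    ∃ l ∈ (List.range' 1 n).permutations', val σ = listVal l :=
  ⟨_, List.mem_permutations'.mpr (ofFn_val_add_one_perm_range' σ), val_eq_listVal σ⟩

set_option maxRecDepth 100000 in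
theorem hasWideDoubleInterval_of_noncrossing {n : ℕ} (h4 : 4 ≤ n) (h7 : n ≤ 7) :
    ∀ l ∈ (List.range' 1 n).permutations',
      Noncrossing {c | c ∈ upperChordList n (listVal l)} →
      Noncrossing {c | c ∈ lowerChordList n (listVal l)} →
      HasWideDoubleInterval n (listVal l) := by
  interval_cases n <;> decide +kernel

/-- `M^{Irr}_n = 0` for `n = 4, 5, 6, 7`. -/
theorem irrCount_eq_zero_of_le_seven (n : ℕ) (h4 : 4 ≤ n) (h7 : n ≤ 7) :
    irrCount n = 0 := by
  rw [irrCount, Nat.card_eq_zero]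
  refine .inl ⟨fun ⟨σ, ⟨hupper, hlower⟩, hirr⟩ => ?_⟩
  obtain ⟨l, hl, hσ⟩ := exists_mem_permutations'_val_eq σ
  have hwide := hasWideDoubleInterval_of_noncrossing h4 h7 l hl
    (hσ ▸ hupper.mono (setOf_mem_upperChordList_subset σ))
    (hσ ▸ hlower.mono (setOf_mem_lowerChordList_subset σ))
  exact (hσ ▸ hwide).not_isIrreducible hirr

end MeanderFormal
end
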